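/- arXiv:2511.21112 — 3 statements merged into one kernel-verified Lean document; each statement's English description precedes it below -/
import Mathlib

section
/- Let n ≥ 2 be even and t ≥ 1. Then there exists a finite simple graph H* of order n + t and a coalition partition π* of H* such that the coalition graph CG(H*, π*) is isomorphic to the disjoint union of the complete graph K_n and t isolated vertices. -/
open scoped Classical

/-- A dominating set (as a finset): every vertex outside `S` has a neighbor in `S`. -/
def IsDomSet {V : Type*} (G : SimpleGraph V) (S : Finset V) : Prop :=
  ∀ v, v ∉ S → ∃ u ∈ S, G.Adj u v

/-- Two (distinct) sets form a coalition: neither dominates, but their union does. -/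
def IsCoalition {V : Type*} (G : SimpleGraph V) (A B : Finset V) : Prop :=
  A ≠ B ∧ ¬ IsDomSet G A ∧ ¬ IsDomSet G B ∧ IsDomSet G (A ∪ B)

/-- A coalition partition (c-partition) of the vertex set of `G`. -/
def IsCPartition {V : Type*} [Fintype V] (G : SimpleGraph V) (π : Finset (Finset V)) : Prop :=
  (∀ A ∈ π, A.Nonempty) ∧
  (∀ A ∈ π, ∀ B ∈ π, A ≠ B → Disjoint A B) ∧
  (∀ v : V, ∃ A ∈ π, v ∈ A) ∧
  (∀ A ∈ π, (∃ v, A = {v} ∧ IsDomSet G A) ∨ ∃ B ∈ π, IsCoalition G A B)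

/-- Number of distinct (unordered) coalitions in the partition `π`. -/
noncomputable def cpCount {V : Type*} [Fintype V] (G : SimpleGraph V)
    (π : Finset (Finset V)) : ℕ :=
  ((π ×ˢ π).filter (fun p => IsCoalition G p.1 p.2)).card / 2

/-- The coalition count `c(G)`: maximum number of distinct coalitions over c-partitions. -/
noncomputable def coalitionCount {V : Type*} [Fintype V] (G : SimpleGraph V) : ℕ :=
  sSup {k | ∃ π, IsCPartition G π ∧ k = cpCount G π}

/-- The coalition number `C(G)`: maximum order of a c-partition. -/
noncomputable def coalitionNumber {V : Type*} [Fintype V] (G : SimpleGraph V) : ℕ :=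
  sSup {k | ∃ π, IsCPartition G π ∧ k = π.card}

/-- The coalition graph `CG(G, π)`. -/
def coalitionGraph {V : Type*} (G : SimpleGraph V) (π : Finset (Finset V)) :
    SimpleGraph {A // A ∈ π} where
  Adj A B := IsCoalition G A.1 B.1
  symm := by
    constructor
    rintro A B ⟨h1, h2, h3, h4⟩
    exact ⟨fun h => h1 h.symm, h3, h2, by rwa [Finset.union_comm]⟩
  loopless := by
    constructor
    rintro A ⟨h1, -⟩
    exact h1 rfl

/-- The set of full vertices (vertices of degree `n - 1`). -/
noncomputable def fullVertices {V : Type*} [Fintype V] (G : SimpleGraph V) : Finset V :=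
  Finset.univ.filter (fun v => G.degree v = Fintype.card V - 1)

/-- The domatic number: maximum order of a partition into dominating sets. -/
noncomputable def domaticNumber {V : Type*} [Fintype V] (G : SimpleGraph V) : ℕ :=
  sSup {k | ∃ P : Finset (Finset V),
    (∀ A ∈ P, A.Nonempty) ∧
    (∀ A ∈ P, ∀ B ∈ P, A ≠ B → Disjoint A B) ∧
    (∀ v : V, ∃ A ∈ P, v ∈ A) ∧
    (∀ A ∈ P, IsDomSet G A) ∧ k = P.card}

/-- The independence number of `G`. -/
noncomputable def indepNumber {V : Type*} [Fintype V] (G : SimpleGraph V) : ℕ :=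
  sSup {k | ∃ s : Finset V, (∀ a ∈ s, ∀ b ∈ s, ¬ G.Adj a b) ∧ k = s.card}

/-- The disjoint union of the complete graph `K_n` (on the first `n` vertices)
and `t` isolated vertices, realized on `Fin (n + t)`. -/
def KnUnionIsolated (n t : ℕ) : SimpleGraph (Fin (n + t)) where
  Adj a b := a ≠ b ∧ (a : ℕ) < n ∧ (b : ℕ) < n
  symm := by constructor; rintro a b ⟨h1, h2, h3⟩; exact ⟨h1.symm, h3, h2⟩
  loopless := by constructor; rintro a ⟨h, -⟩; exact h rfl

/-
The coalition graph is realised by the partition of `K_{n+t}` minus a perfect matching on `n`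
vertices into singletons. A singleton `{v}` dominates iff `v` is full, i.e. unmatched. Two distinct
matched vertices `v, w` form a coalition: a vertex missed by `v` is its partner, which `w`, having
a different partner, dominates. So the matched singletons form a `K_n` in the coalition graph and
the `t` unmatched ones are dominating, hence isolated.
-/

section Singletons

variable {V : Type*}

theorem isDomSet_singleton_iff (G : SimpleGraph V) (v : V) :
    IsDomSet G {v} ↔ ∀ u, u ≠ v → G.Adj v u := by
  simp [IsDomSet]

variable (V) [Fintype V]

def singletonPartition : Finset (Finset V) :=
  Finset.univ.map ⟨singleton, Finset.singleton_injective⟩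

variable {V}

theorem mem_singletonPartition {A : Finset V} : A ∈ singletonPartition V ↔ ∃ v, {v} = A := by
  simp [singletonPartition]

noncomputable def singletonPartitionEquiv : V ≃ {A // A ∈ singletonPartition V} :=
  Equiv.ofBijective (fun v => ⟨{v}, mem_singletonPartition.2 ⟨v, rfl⟩⟩)
    ⟨fun _ _ h => Finset.singleton_injective (congrArg Subtype.val h), fun ⟨_, hA⟩ =>
      (mem_singletonPartition.1 hA).imp fun _ hv => Subtype.ext hv⟩

theorem isCPartition_singletonPartition {G : SimpleGraph V}
    (h : ∀ v, IsDomSet G {v} ∨ ∃ w, IsCoalition G {v} {w}) :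
    IsCPartition G (singletonPartition V) := by
  refine ⟨?_, ?_, fun v => ⟨{v}, mem_singletonPartition.2 ⟨v, rfl⟩, Finset.mem_singleton_self v⟩,
    ?_⟩
  · rintro _ hA
    obtain ⟨v, rfl⟩ := mem_singletonPartition.1 hA
    exact Finset.singleton_nonempty v
  · rintro _ hA _ hB hAB
    obtain ⟨v, rfl⟩ := mem_singletonPartition.1 hA
    obtain ⟨w, rfl⟩ := mem_singletonPartition.1 hB
    exact Finset.disjoint_singleton.2 fun hvw => hAB (hvw ▸ rfl)
  · rintro _ hA
    obtain ⟨v, rfl⟩ := mem_singletonPartition.1 hA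
    rcases h v with hdom | ⟨w, hvw⟩
    · exact Or.inl ⟨v, rfl, hdom⟩
    · exact Or.inr ⟨{w}, mem_singletonPartition.2 ⟨w, rfl⟩, hvw⟩

noncomputable def coalitionGraphSingletonPartitionIso {G H : SimpleGraph V}
    (h : ∀ v w, IsCoalition G {v} {w} ↔ H.Adj v w) :
    coalitionGraph G (singletonPartition V) ≃g H :=
  RelIso.symm ⟨singletonPartitionEquiv, fun {v w} => h v w⟩

end Singletons

section MatchingComplement

variable {V : Type*} {p : V → V}

def matchingComplement (p : V → V) (hp : p.Involutive) : SimpleGraph V where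
  Adj a b := a ≠ b ∧ b ≠ p a
  symm := ⟨fun _ b ⟨hab, hba⟩ => ⟨hab.symm, fun h => hba (h ▸ (hp b).symm)⟩⟩
  loopless := ⟨fun _ ⟨h, _⟩ => h rfl⟩

variable (hp : p.Involutive)

theorem isDomSet_matchingComplement_singleton_iff (v : V) :
    IsDomSet (matchingComplement p hp) {v} ↔ p v = v := by
  rw [isDomSet_singleton_iff]
  refine ⟨fun h => ?_, fun h u hu => ⟨hu.symm, by rwa [h]⟩⟩
  by_contra hpv
  exact (h (p v) hpv).2 rfl

theorem isDomSet_matchingComplement_pair {v w : V} (hvw : v ≠ w) :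
    IsDomSet (matchingComplement p hp) ({v} ∪ {w}) := by
  intro u hu
  simp only [Finset.mem_union, Finset.mem_singleton, not_or] at hu
  by_cases hpv : u = p v
  · -- `u` cannot also be the partner of `w`, since `p` is injective
    refine ⟨w, by simp, Ne.symm hu.2, fun hpw => hvw (hp.injective ?_)⟩
    rw [← hpv, hpw]
  · exact ⟨v, by simp, Ne.symm hu.1, hpv⟩

theorem isCoalition_matchingComplement_singleton_iff (v w : V) :
    IsCoalition (matchingComplement p hp) {v} {w} ↔ v ≠ w ∧ p v ≠ v ∧ p w ≠ w := by
  simp only [IsCoalition, isDomSet_matchingComplement_singleton_iff, Ne, Finset.singleton_inj]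
  exact ⟨fun ⟨hvw, hv, hw, _⟩ => ⟨hvw, hv, hw⟩,
    fun ⟨hvw, hv, hw⟩ => ⟨hvw, hv, hw, isDomSet_matchingComplement_pair hp hvw⟩⟩

theorem isCPartition_matchingComplement_singletonPartition [Fintype V] :
    IsCPartition (matchingComplement p hp) (singletonPartition V) := by
  refine isCPartition_singletonPartition fun v => ?_
  rw [isDomSet_matchingComplement_singleton_iff]
  refine or_iff_not_imp_left.2 fun hv => ⟨p v, ?_⟩
  rw [isCoalition_matchingComplement_singleton_iff, hp v]
  exact ⟨Ne.symm hv, hv, Ne.symm hv⟩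

end MatchingComplement

def pairSwap (m t : ℕ) (v : Fin (m + m + t)) : Fin (m + m + t) :=
  if hv : (v : ℕ) < m + m then
    ⟨if (v : ℕ) % 2 = 0 then v + 1 else v - 1, by split_ifs <;> omega⟩
  else v

theorem val_pairSwap {m t : ℕ} (v : Fin (m + m + t)) :
    (pairSwap m t v : ℕ) =
      if (v : ℕ) < m + m then (if (v : ℕ) % 2 = 0 then (v : ℕ) + 1 else v - 1) else v := by
  unfold pairSwap
  split_ifs <;> rfl

theorem pairSwap_involutive (m t : ℕ) : (pairSwap m t).Involutive := by
  intro v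
  ext
  rw [val_pairSwap, val_pairSwap]
  split_ifs <;> omega

theorem pairSwap_ne_self_iff {m t : ℕ} (v : Fin (m + m + t)) :
    pairSwap m t v ≠ v ↔ (v : ℕ) < m + m := by
  rw [Ne, Fin.ext_iff, val_pairSwap]
  split_ifs <;> omega

theorem stmt_1_general (n t : ℕ) (hev : Even n) :
    ∃ (H : SimpleGraph (Fin (n + t))) (π : Finset (Finset (Fin (n + t)))),
      IsCPartition H π ∧ Nonempty (coalitionGraph H π ≃g KnUnionIsolated n t) := by
  obtain ⟨m, rfl⟩ := hev
  have hp := pairSwap_involutive m t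
  refine ⟨matchingComplement _ hp, singletonPartition _,
    isCPartition_matchingComplement_singletonPartition hp,
    ⟨coalitionGraphSingletonPartitionIso fun v w => ?_⟩⟩
  rw [isCoalition_matchingComplement_singleton_iff, pairSwap_ne_self_iff, pairSwap_ne_self_iff]
  rfl

/-- For even `n ≥ 2` and `t ≥ 1`, there is a graph `H*` of order `n + t`
with a coalition partition `π*` such that `CG(H*, π*) ≅ K_n ∪ tK_1`. -/
theorem stmt_1 (n t : ℕ) (hn : 2 ≤ n) (hev : Even n) (ht : 1 ≤ t) :
    ∃ (H : SimpleGraph (Fin (n + t))) (π : Finset (Finset (Fin (n + t)))),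
      IsCPartition H π ∧ Nonempty (coalitionGraph H π ≃g KnUnionIsolated n t) :=
  stmt_1_general n t hev
end

section
/- For any finite simple graph G with no isolated vertices having exactly f full vertices, the coalition count satisfies c(G) ≥ d(G) − f, where d(G) is the domatic number of G. -/
open scoped Classical

/-!
Start from a maximum domatic partition. Its classes meeting the `f` full vertices are at most `f`
many; discarding them, adding the singletons of the full vertices and giving the uncovered
vertices to one of the remaining classes yields a partition into at least `d(G)` dominating sets
in which every full vertex is a singleton class. By maximality no class splits into two dominating
sets, and the classes other than these singletons contain no full vertex. In such a class `S` take
a minimal dominating `D ⊆ S` and `x ∈ D`: either `(S \ D) ∪ {x}` and `D \ {x}` form a coalition,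
or `{x}` forms a coalition with both `D \ {x}` and `S \ D`. Refining every such class accordingly
gives a c-partition with a coalition inside each of at least `d(G) - f` classes.
-/

open Finset

section Domination

variable {V : Type*} {G : SimpleGraph V}

lemma IsDomSet.mono {A B : Finset V} (hAB : A ⊆ B) (hA : IsDomSet G A) : IsDomSet G B :=
  fun v hv ↦
    let ⟨u, hu, huv⟩ := hA v fun h ↦ hv (hAB h)
    ⟨u, hAB hu, huv⟩

lemma IsDomSet.nonempty [Nonempty V] {A : Finset V} (hA : IsDomSet G A) : A.Nonempty := by
  by_contra h
  obtain ⟨u, hu, -⟩ := hA (Classical.arbitrary V) (by simp_all [not_nonempty_iff_eq_empty])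
  simp_all [not_nonempty_iff_eq_empty]

lemma isDomSet_singleton_iff_s4 {v : V} : IsDomSet G {v} ↔ G.IsUniversal v := by
  simp [IsDomSet, SimpleGraph.IsUniversal, eq_comm]

lemma IsCoalition.symm {A B : Finset V} (h : IsCoalition G A B) : IsCoalition G B A :=
  ⟨h.1.symm, h.2.2.1, h.2.1, union_comm A B ▸ h.2.2.2⟩

lemma isCoalition_of_disjoint {A B : Finset V} (hA : A.Nonempty) (hAB : Disjoint A B)
    (hA' : ¬ IsDomSet G A) (hB' : ¬ IsDomSet G B) (h : IsDomSet G (A ∪ B)) :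
    IsCoalition G A B :=
  ⟨by rintro rfl; exact hA.ne_empty (disjoint_self.1 hAB), hA', hB', h⟩

variable [Fintype V]

lemma mem_fullVertices_iff {v : V} : v ∈ fullVertices G ↔ IsDomSet G {v} := by
  simp [fullVertices, isDomSet_singleton_iff_s4]

end Domination

section Packing

variable {V : Type*} {G : SimpleGraph V}

def IsDomPacking (G : SimpleGraph V) (P : Finset (Finset V)) : Prop :=
  (P : Set (Finset V)).PairwiseDisjoint id ∧ ∀ A ∈ P, A.Nonempty ∧ IsDomSet G A

lemma IsDomPacking.subset {P Q : Finset (Finset V)} (hP : IsDomPacking G P) (hQP : Q ⊆ P) :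
    IsDomPacking G Q :=
  ⟨hP.1.subset (coe_subset.2 hQP), fun A hA ↦ hP.2 A (hQP hA)⟩

lemma IsDomPacking.insert_of_disjoint {P : Finset (Finset V)} {X : Finset V}
    (hP : IsDomPacking G P) (hX : X.Nonempty) (hXd : IsDomSet G X)
    (hdisj : ∀ B ∈ P, X ≠ B → Disjoint X B) :
    IsDomPacking G (insert X P) := by
  refine ⟨by simpa only [coe_insert] using hP.1.insert hdisj, ?_⟩
  rintro A hA
  rcases mem_insert.1 hA with rfl | hA
  exacts [⟨hX, hXd⟩, hP.2 A hA]

variable [Fintype V]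

lemma exists_isDomPacking_card_eq_domaticNumber :
    ∃ P, IsDomPacking G P ∧ (∀ v, ∃ A ∈ P, v ∈ A) ∧ #P = domaticNumber G := by
  -- the trivial partition, `{univ}`, or `∅` when `V` is empty
  have htriv : ∀ A ∈ univ.image fun _ : V ↦ (univ : Finset V), A.Nonempty := fun _ h ↦ by
    obtain ⟨v, -, rfl⟩ := mem_image.1 h
    exact ⟨v, mem_univ v⟩
  obtain ⟨P, hne, hdisj, hcov, hdom, hP⟩ : domaticNumber G ∈ _ :=
    Nat.sSup_mem
      ⟨_, _, htriv, by simp, fun v ↦ ⟨univ, mem_image.2 ⟨v, mem_univ v, rfl⟩, mem_univ v⟩,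
        by simp [IsDomSet], rfl⟩
      ⟨Fintype.card (Finset V), by rintro _ ⟨P, -, -, -, -, rfl⟩; exact card_le_univ P⟩
  exact ⟨P, ⟨fun _ hA _ hB ↦ hdisj _ hA _ hB, fun A hA ↦ ⟨hne A hA, hdom A hA⟩⟩, hcov, hP.symm⟩

lemma IsDomPacking.exists_cover {P : Finset (Finset V)} {A : Finset V} (hP : IsDomPacking G P)
    (hA : A ∈ P) :
    ∃ P', IsDomPacking G P' ∧ (∀ v, ∃ B ∈ P', v ∈ B) ∧ #P ≤ #P' ∧ P.erase A ⊆ P' := by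
  set L := univ \ P.biUnion id
  refine ⟨insert (A ∪ L) (P.erase A), ?_, ?_, ?_, subset_insert _ _⟩
  · refine (hP.subset (erase_subset A P)).insert_of_disjoint
      ((hP.2 A hA).1.mono subset_union_left) ((hP.2 A hA).2.mono subset_union_left) fun B hB _ ↦ ?_
    obtain ⟨hBA, hB⟩ := mem_erase.1 hB
    exact disjoint_union_left.2 ⟨hP.1 hA hB (Ne.symm hBA),
      sdiff_disjoint.mono_right (subset_biUnion_of_mem id hB)⟩
  · intro v
    by_cases hv : v ∈ P.biUnion id
    · obtain ⟨B, hB, hvB⟩ := mem_biUnion.1 hv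
      by_cases hBA : B = A
      · exact ⟨A ∪ L, mem_insert_self _ _, mem_union_left _ (hBA ▸ hvB)⟩
      · exact ⟨B, mem_insert_of_mem (mem_erase.2 ⟨hBA, hB⟩), hvB⟩
    · exact ⟨A ∪ L, mem_insert_self _ _, mem_union_right _ (mem_sdiff.2 ⟨mem_univ v, hv⟩)⟩
  · rw [card_insert_of_notMem, card_erase_add_one hA]
    intro h
    obtain ⟨hne, hmem⟩ := mem_erase.1 h
    obtain ⟨a, ha⟩ := (hP.2 A hA).1
    exact disjoint_left.1 (hP.1 hA hmem hne.symm) ha (mem_union_left _ ha)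

lemma IsDomPacking.card_le_domaticNumber {P : Finset (Finset V)} (hP : IsDomPacking G P) :
    #P ≤ domaticNumber G := by
  obtain rfl | ⟨A, hA⟩ := P.eq_empty_or_nonempty
  · simp
  obtain ⟨P', hP', hcov, hPP', -⟩ := hP.exists_cover hA
  exact hPP'.trans <| le_csSup
    ⟨Fintype.card (Finset V), by rintro _ ⟨P, -, -, -, -, rfl⟩; exact card_le_univ P⟩
    ⟨P', fun A hA ↦ (hP'.2 A hA).1, fun _ hA _ hB ↦ hP'.1 hA hB, hcov,
      fun A hA ↦ (hP'.2 A hA).2, rfl⟩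

lemma IsDomPacking.not_isDomSet_sdiff {P : Finset (Finset V)} {S D : Finset V}
    (hP : IsDomPacking G P) (hd : domaticNumber G ≤ #P) (hS : S ∈ P) (hDS : D ⊆ S)
    (hD : IsDomSet G D) (hSD : (S \ D).Nonempty) : ¬ IsDomSet G (S \ D) := by
  intro hSD'
  have : Nonempty V := ⟨hSD.choose⟩
  have hdisj : ∀ X ⊆ S, ∀ B ∈ P.erase S, Disjoint X B := fun X hX B hB ↦
    (hP.1 hS (mem_erase.1 hB).2 (mem_erase.1 hB).1.symm).mono_left hX
  have hnotMem : ∀ X ⊆ S, X.Nonempty → X ∉ P.erase S := fun X hX hXne h ↦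
    hXne.ne_empty (disjoint_self.1 (hdisj X hX X h))
  have h₁ : IsDomPacking G (insert (S \ D) (P.erase S)) :=
    (hP.subset (erase_subset S P)).insert_of_disjoint hSD hSD' fun B hB _ ↦
      hdisj _ sdiff_subset B hB
  have h₂ : IsDomPacking G (insert D (insert (S \ D) (P.erase S))) :=
    h₁.insert_of_disjoint hD.nonempty hD fun B hB _ ↦ by
      rcases mem_insert.1 hB with rfl | hB
      exacts [disjoint_sdiff, hdisj D hDS B hB]
  have hcard := h₂.card_le_domaticNumber
  rw [card_insert_of_notMem, card_insert_of_notMem (hnotMem _ sdiff_subset hSD),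
    card_erase_add_one hS] at hcard
  · omega
  intro h
  rcases mem_insert.1 h with h | h
  · have hDD : Disjoint D (S \ D) := disjoint_sdiff
    rw [← h] at hDD
    exact hD.nonempty.ne_empty (disjoint_self.1 hDD)
  · exact hnotMem D hDS hD.nonempty h

end Packing

lemma card_filter_not_disjoint_le {α : Type*} [DecidableEq α] {Q : Finset (Finset α)}
    (hQ : (Q : Set (Finset α)).PairwiseDisjoint id) (F : Finset α) :
    #(Q.filter fun A ↦ ¬ Disjoint A F) ≤ #F :=
  calc #(Q.filter fun A ↦ ¬ Disjoint A F)
      ≤ #((Q.filter fun A ↦ ¬ Disjoint A F).biUnion (· ∩ F)) :=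
        card_le_card_biUnion
          ((hQ.subset (coe_subset.2 (filter_subset _ _))).mono fun _ ↦ inter_subset_left)
          fun _ hA ↦ not_disjoint_iff_nonempty_inter.1 (mem_filter.1 hA).2
    _ ≤ #F := card_le_card (biUnion_subset.2 fun _ _ ↦ inter_subset_right)

section FullVertices

variable {V : Type*} [Fintype V] {G : SimpleGraph V}

lemma exists_isDomPacking_singleton_fullVertices (h : #(fullVertices G) < domaticNumber G) :
    ∃ P, IsDomPacking G P ∧ (∀ v, ∃ A ∈ P, v ∈ A) ∧ domaticNumber G ≤ #P ∧
      ∀ v ∈ fullVertices G, {v} ∈ P := by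
  obtain ⟨Q, hQ, -, hQd⟩ := exists_isDomPacking_card_eq_domaticNumber (G := G)
  set F := fullVertices G
  set N := Q.filter fun A ↦ Disjoint A F
  set I := F.image ({·} : V → Finset V)
  have hNI : ∀ A ∈ N, ∀ v ∈ F, Disjoint A {v} := fun A hA v hv ↦
    disjoint_singleton_right.2 fun hvA ↦ disjoint_left.1 (mem_filter.1 hA).2 hvA hv
  have hpack : IsDomPacking G (N ∪ I) := by
    refine ⟨?_, fun A hA ↦ ?_⟩
    · rw [coe_union]
      refine (hQ.1.subset (coe_subset.2 (filter_subset _ _))).union ?_ ?_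
      · rintro _ hA _ hB hAB
        obtain ⟨v, -, rfl⟩ := mem_image.1 hA
        obtain ⟨w, -, rfl⟩ := mem_image.1 hB
        exact disjoint_singleton.2 fun h ↦ hAB (h ▸ rfl)
      · rintro A hA _ hB -
        obtain ⟨v, hv, rfl⟩ := mem_image.1 hB
        exact hNI A hA v hv
    rcases mem_union.1 hA with hA | hA
    · exact hQ.2 A (mem_filter.1 hA).1
    · obtain ⟨v, hv, rfl⟩ := mem_image.1 hA
      exact ⟨singleton_nonempty v, mem_fullVertices_iff.1 hv⟩
  have hcard : domaticNumber G ≤ #N + #F := by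
    have := card_filter_not_disjoint_le hQ.1 F
    have : #N + #(Q.filter fun A ↦ ¬ Disjoint A F) = #Q := card_filter_add_card_filter_not _
    omega
  obtain ⟨S₀, hS₀⟩ : N.Nonempty := card_pos.1 (by omega)
  obtain ⟨P, hP, hcov, hNIP, hsub⟩ := hpack.exists_cover (mem_union_left I hS₀)
  have hNI' : Disjoint N I := disjoint_left.2 fun A hAN hAI ↦ by
    obtain ⟨v, hv, rfl⟩ := mem_image.1 hAI
    exact singleton_ne_empty v (disjoint_self.1 (hNI _ hAN v hv))
  rw [card_union_of_disjoint hNI', card_image_of_injective _ singleton_injective] at hNIP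
  refine ⟨P, hP, hcov, hcard.trans hNIP, fun v hv ↦ hsub (mem_erase.2 ⟨?_, ?_⟩)⟩
  · rintro rfl
    exact singleton_ne_empty v (disjoint_self.1 (hNI _ hS₀ v hv))
  · exact mem_union_right _ (mem_image_of_mem _ hv)

end FullVertices

section Splitting

variable {V : Type*} {G : SimpleGraph V}

lemma exists_finpartition_of_isCoalition {A B S : Finset V} (hA : A.Nonempty) (hB : B.Nonempty)
    (hAB : Disjoint A B) (hS : A ∪ B = S) (h : IsCoalition G A B) :
    ∃ Q : Finpartition S, ∀ X ∈ Q.parts, ∃ Y ∈ Q.parts, IsCoalition G X Y := by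
  refine ⟨(Finpartition.indiscrete hA.ne_empty).extend hB.ne_empty hAB hS, ?_⟩
  simp only [Finpartition.extend_parts, Finpartition.indiscrete_parts, mem_insert, mem_singleton]
  rintro X (rfl | rfl)
  · exact ⟨A, by simp, h.symm⟩
  · exact ⟨B, by simp, h⟩

lemma exists_finpartition_of_isCoalition_of_isCoalition {C A B S : Finset V} (hC : C.Nonempty)
    (hA : A.Nonempty) (hB : B.Nonempty) (hCA : Disjoint C A) (hCAB : Disjoint (C ∪ A) B)
    (hS : C ∪ A ∪ B = S) (h₁ : IsCoalition G C A) (h₂ : IsCoalition G C B) :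
    ∃ Q : Finpartition S, ∀ X ∈ Q.parts, ∃ Y ∈ Q.parts, IsCoalition G X Y := by
  refine ⟨((Finpartition.indiscrete hC.ne_empty).extend hA.ne_empty hCA rfl).extend
    hB.ne_empty hCAB hS, ?_⟩
  simp only [Finpartition.extend_parts, Finpartition.indiscrete_parts, mem_insert, mem_singleton]
  rintro X (rfl | rfl | rfl)
  · exact ⟨C, by simp, h₂.symm⟩
  · exact ⟨C, by simp, h₁.symm⟩
  · exact ⟨A, by simp, h₁⟩

lemma exists_finpartition_isCoalition {S : Finset V} (hne : S.Nonempty) (hS : IsDomSet G S)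
    (hfree : ∀ v ∈ S, ¬ IsDomSet G {v})
    (hsplit : ∀ D ⊆ S, IsDomSet G D → (S \ D).Nonempty → ¬ IsDomSet G (S \ D)) :
    ∃ Q : Finpartition S, ∀ A ∈ Q.parts, ∃ B ∈ Q.parts, IsCoalition G A B := by
  have : Nonempty V := ⟨hne.choose⟩
  obtain ⟨D, hDS, hDmin⟩ := exists_minimal_le_of_wellFoundedLT (IsDomSet G) S hS
  obtain ⟨x, hx⟩ := hDmin.1.nonempty
  have hxD : insert x (D.erase x) = D := insert_erase hx
  have hDx : ¬ IsDomSet G (D.erase x) := fun h ↦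
    notMem_erase x D (hDmin.2 h (erase_subset x D) hx)
  have hDx_ne : (D.erase x).Nonempty := by
    refine nonempty_iff_ne_empty.2 fun h ↦ hfree x (hDS hx) ?_
    rw [← insert_empty, ← h, hxD]
    exact hDmin.1
  by_cases hxSD : IsDomSet G (insert x (S \ D))
  · have hSD_ne : (S \ D).Nonempty := by
      refine nonempty_iff_ne_empty.2 fun h ↦ hfree x (hDS hx) ?_
      rwa [h, insert_empty] at hxSD
    have hx_union : ∀ X : Finset V, {x} ∪ X = insert x X := fun X ↦ (insert_eq x X).symm
    refine exists_finpartition_of_isCoalition_of_isCoalition (singleton_nonempty x) hDx_ne hSD_ne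
      (disjoint_singleton_left.2 (notMem_erase x D)) (by rw [hx_union, hxD]; exact disjoint_sdiff)
      (by rw [hx_union, hxD, union_sdiff_of_subset hDS]) ?_ ?_
    · exact isCoalition_of_disjoint (singleton_nonempty x)
        (disjoint_singleton_left.2 (notMem_erase x D)) (hfree x (hDS hx)) hDx
        (by rw [hx_union, hxD]; exact hDmin.1)
    · exact isCoalition_of_disjoint (singleton_nonempty x)
        (disjoint_singleton_left.2 fun h ↦ (mem_sdiff.1 h).2 hx) (hfree x (hDS hx))
        (hsplit D hDS hDmin.1 hSD_ne) (by rwa [hx_union])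
  · have hdisj : Disjoint (insert x (S \ D)) (D.erase x) :=
      disjoint_insert_left.2 ⟨notMem_erase x D, sdiff_disjoint.mono_right (erase_subset x D)⟩
    have hunion : insert x (S \ D) ∪ D.erase x = S := by
      rw [insert_union, ← union_insert, hxD, sdiff_union_of_subset hDS]
    exact exists_finpartition_of_isCoalition (insert_nonempty x _) hDx_ne hdisj hunion
      (isCoalition_of_disjoint (insert_nonempty x _) hdisj hxSD hDx (by rw [hunion]; exact hS))

end Splitting

section Counting

variable {V : Type*} [Fintype V] {G : SimpleGraph V}

lemma cpCount_le_coalitionCount {π : Finset (Finset V)} (hπ : IsCPartition G π) :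
    cpCount G π ≤ coalitionCount G :=
  le_csSup
    ((Set.finite_range (cpCount G)).subset (by rintro _ ⟨π, -, rfl⟩; exact ⟨π, rfl⟩)).bddAbove
    ⟨π, hπ, rfl⟩

lemma card_le_cpCount {π s : Finset (Finset V)} (hs : (s : Set (Finset V)).PairwiseDisjoint id)
    (h : ∀ T ∈ s, ∃ A ∈ π, ∃ B ∈ π, A.Nonempty ∧ A ⊆ T ∧ B ⊆ T ∧ IsCoalition G A B) :
    #s ≤ cpCount G π := by
  choose! A hAπ B hBπ hAne hAT hBT hAB using h
  -- both orientations of the coalition chosen in each `T`: `2 * #s` ordered coalitions in all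
  let e : Finset V × Bool → Finset V × Finset V :=
    fun p ↦ bif p.2 then (A p.1, B p.1) else (B p.1, A p.1)
  have hmaps : Set.MapsTo e ↑(s ×ˢ (univ : Finset Bool))
      ↑((π ×ˢ π).filter fun p ↦ IsCoalition G p.1 p.2) := by
    rintro ⟨T, b⟩ hT
    simp only [coe_product, coe_univ, Set.mem_prod, mem_coe, Set.mem_univ, and_true] at hT
    cases b
    · simpa [e, hAπ T hT, hBπ T hT] using (hAB T hT).symm
    · simpa [e, hAπ T hT, hBπ T hT] using hAB T hT
  have hinj : Set.InjOn e ↑(s ×ˢ (univ : Finset Bool)) := by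
    rintro ⟨T, b⟩ hT ⟨U, c⟩ hU he
    simp only [coe_product, coe_univ, Set.mem_prod, mem_coe, Set.mem_univ, and_true] at hT hU
    have hTU : T = U := by
      have hA : A T = A U ∨ A T = B U := by
        cases b <;> cases c <;> simp only [e, cond_true, cond_false, Prod.mk.injEq] at he <;> tauto
      obtain ⟨a, ha⟩ := hAne T hT
      refine hs.elim_finset hT hU a (hAT T hT ha) ?_
      rcases hA with h | h <;> rw [h] at ha
      exacts [hAT U hU ha, hBT U hU ha]
    subst hTU
    have := (hAB T hT).1
    cases b <;> cases c <;> simp_all [e]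
  have := card_le_card_of_injOn e hmaps hinj
  rw [card_product, card_univ, Fintype.card_bool] at this
  rw [cpCount]
  omega

end Counting

section CPartition

variable {V : Type*} [Fintype V] {G : SimpleGraph V}

noncomputable def IsDomPacking.toFinpartition {P : Finset (Finset V)} (hP : IsDomPacking G P)
    (hcov : ∀ v, ∃ A ∈ P, v ∈ A) : Finpartition (univ : Finset V) :=
  Finpartition.ofExistsUnique P (fun _ _ ↦ subset_univ _)
    (fun v _ ↦
      let ⟨A, hA, hvA⟩ := hcov v
      ⟨A, ⟨hA, hvA⟩, fun _ hB ↦ hP.1.elim_finset hB.1 hA v hB.2 hvA⟩)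
    fun h ↦ (hP.2 ∅ h).1.ne_empty rfl

lemma Finpartition.isCPartition (P : Finpartition (univ : Finset V))
    (h : ∀ A ∈ P.parts, (∃ v, A = {v} ∧ IsDomSet G A) ∨ ∃ B ∈ P.parts, IsCoalition G A B) :
    IsCPartition G P.parts :=
  ⟨fun _ ↦ P.nonempty_of_mem_parts, fun _ hA _ hB ↦ P.disjoint hA hB,
    fun v ↦ P.exists_mem (mem_univ v), h⟩

lemma IsDomPacking.exists_finpartition {P : Finset (Finset V)} {T : Finset V}
    (hP : IsDomPacking G P) (hd : domaticNumber G ≤ #P)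
    (hfull : ∀ v ∈ fullVertices G, {v} ∈ P) (hT : T ∈ P) :
    ∃ Q : Finpartition T,
      (∀ A ∈ Q.parts, (∃ v, A = {v} ∧ IsDomSet G A) ∨ ∃ B ∈ Q.parts, IsCoalition G A B) ∧
      (T ∉ (fullVertices G).image ({·} : V → Finset V) →
        ∃ A ∈ Q.parts, ∃ B ∈ Q.parts, IsCoalition G A B) := by
  by_cases hTF : T ∈ (fullVertices G).image ({·} : V → Finset V)
  · obtain ⟨v, hv, rfl⟩ := mem_image.1 hTF
    refine ⟨Finpartition.indiscrete (singleton_ne_empty v), ?_, fun h ↦ (h hTF).elim⟩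
    simp only [Finpartition.indiscrete_parts, mem_singleton]
    rintro A rfl
    exact Or.inl ⟨v, rfl, mem_fullVertices_iff.1 hv⟩
  have hfree : ∀ v ∈ T, ¬ IsDomSet G {v} := fun v hvT hv ↦ hTF <| mem_image.2
    ⟨v, mem_fullVertices_iff.2 hv,
      hP.1.elim_finset (hfull v (mem_fullVertices_iff.2 hv)) hT v (mem_singleton_self v) hvT⟩
  obtain ⟨Q, hQ⟩ := exists_finpartition_isCoalition (hP.2 T hT).1 (hP.2 T hT).2 hfree
    fun D hDT hD hTD ↦ hP.not_isDomSet_sdiff hd hT hDT hD hTD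
  obtain ⟨A, hA⟩ := Q.parts_nonempty (hP.2 T hT).1.ne_empty
  obtain ⟨B, hB, hAB⟩ := hQ A hA
  exact ⟨Q, fun A hA ↦ Or.inr (hQ A hA), fun _ ↦ ⟨A, hA, B, hB, hAB⟩⟩

end CPartition

theorem stmt_4_general {V : Type} [Fintype V] (G : SimpleGraph V) (f : ℕ)
    (hf : (fullVertices G).card = f) :
    domaticNumber G - f ≤ coalitionCount G := by
  subst hf
  rcases le_or_gt (domaticNumber G) #(fullVertices G) with h | h
  · simp [Nat.sub_eq_zero_of_le h]
  obtain ⟨P, hP, hcov, hd, hfull⟩ := exists_isDomPacking_singleton_fullVertices h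
  choose Q hQ hQR using fun T (hT : T ∈ P) ↦ hP.exists_finpartition hd hfull hT
  set π := ((hP.toFinpartition hcov).bind Q).parts
  have hπ : IsCPartition G π := Finpartition.isCPartition _ fun A hA ↦ by
    obtain ⟨T, hT, hAT⟩ := Finpartition.mem_bind.1 hA
    exact (hQ T hT A hAT).imp_right fun ⟨B, hB, hAB⟩ ↦
      ⟨B, Finpartition.mem_bind.2 ⟨T, hT, hB⟩, hAB⟩
  set R := P \ (fullVertices G).image ({·} : V → Finset V)
  calc domaticNumber G - #(fullVertices G) ≤ #R := by
        have hR : #P - #((fullVertices G).image ({·} : V → Finset V)) ≤ #R := le_card_sdiff _ _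
        have := card_image_le (s := fullVertices G) (f := ({·} : V → Finset V))
        omega
    _ ≤ cpCount G π := card_le_cpCount (hP.1.subset (coe_subset.2 sdiff_subset)) fun T hT ↦ by
        obtain ⟨A, hA, B, hB, hAB⟩ := hQR T (mem_sdiff.1 hT).1 (mem_sdiff.1 hT).2
        exact ⟨A, Finpartition.mem_bind.2 ⟨T, _, hA⟩, B, Finpartition.mem_bind.2 ⟨T, _, hB⟩,
          (Q T _).nonempty_of_mem_parts hA, (Q T _).le hA, (Q T _).le hB, hAB⟩
    _ ≤ coalitionCount G := cpCount_le_coalitionCount hπ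

/-- For any graph `G` with no isolated vertices and exactly `f` full vertices,
`c(G) ≥ d(G) - f`. -/
theorem stmt_4 {V : Type} [Fintype V] (G : SimpleGraph V) (f : ℕ)
    (hiso : ∀ v : V, ∃ u, G.Adj v u)
    (hf : (fullVertices G).card = f) :
    domaticNumber G - f ≤ coalitionCount G :=
  stmt_4_general G f hf
end

section
/- The coalition count of the cycle C_4 on four vertices equals 6, i.e., c(C_4) = 6. -/
open scoped Classical

/-!
A c-partition has at most `n = |V|` parts and every coalition is a pair of distinct parts, so
`c(G) ≤ n.choose 2`. In `C₄` two distinct vertices dominate the cycle while a single vertex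
misses the opposite one, so any two singletons form a coalition: the partition into singletons
is a c-partition realising all `4.choose 2 = 6` pairs.
-/

open Finset

section

variable {V : Type*} [Fintype V] {G : SimpleGraph V} {π : Finset (Finset V)}

theorem IsCPartition.card_le (h : IsCPartition G π) : #π ≤ Fintype.card V :=
  calc #π ≤ #(π.biUnion id) :=
        card_le_card_biUnion (fun A hA B hB hAB => h.2.1 A hA B hB hAB) h.1
    _ ≤ Fintype.card V := card_le_univ _

theorem cpCount_le_choose_two_card : cpCount G π ≤ (#π).choose 2 := by
  have hsub : (π ×ˢ π).filter (fun p => IsCoalition G p.1 p.2) ⊆ π.offDiag := by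
    intro p hp
    simp only [mem_filter, mem_product] at hp
    exact mem_offDiag.2 ⟨hp.1.1, hp.1.2, hp.2.1⟩
  rw [cpCount, Nat.choose_two_right, Nat.mul_sub_one, ← offDiag_card]
  exact Nat.div_le_div_right (card_le_card hsub)

theorem cpCount_le_choose_two (h : IsCPartition G π) :
    cpCount G π ≤ (Fintype.card V).choose 2 :=
  cpCount_le_choose_two_card.trans (Nat.choose_le_choose 2 h.card_le)

variable (V) in
def singletons : Finset (Finset V) :=
  univ.map ⟨singleton, singleton_injective⟩

@[simp]
theorem mem_singletons {A : Finset V} : A ∈ singletons V ↔ ∃ v, {v} = A := by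
  simp [singletons]

section Singletons

variable (hG : ∀ u v : V, u ≠ v → IsCoalition G {u} {v})
include hG

theorem isCPartition_singletons : IsCPartition G (singletons V) := by
  refine ⟨?_, ?_, fun v => ⟨{v}, by simp, mem_singleton_self v⟩, ?_⟩
  · simp
  · simp only [mem_singletons]
    rintro _ ⟨u, rfl⟩ _ ⟨v, rfl⟩ huv
    exact disjoint_singleton.2 fun h => huv (h ▸ rfl)
  · simp only [mem_singletons]
    rintro _ ⟨v, rfl⟩
    by_cases hv : ∃ u, u ≠ v
    · obtain ⟨u, hu⟩ := hv
      exact Or.inr ⟨{u}, by simp, hG v u hu.symm⟩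
    · simp only [not_exists, ne_eq, not_not] at hv
      exact Or.inl ⟨v, rfl, fun w hw => absurd (hv w) (by simpa using hw)⟩

theorem cpCount_singletons : cpCount G (singletons V) = (Fintype.card V).choose 2 := by
  have hfilter : ((singletons V) ×ˢ (singletons V)).filter (fun p => IsCoalition G p.1 p.2) =
      (singletons V).offDiag := by
    ext ⟨A, B⟩
    simp only [mem_filter, mem_product, mem_offDiag, mem_singletons]
    constructor
    · rintro ⟨⟨hA, hB⟩, hAB, -⟩
      exact ⟨hA, hB, hAB⟩
    · rintro ⟨⟨u, rfl⟩, ⟨v, rfl⟩, huv⟩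
      exact ⟨⟨⟨u, rfl⟩, ⟨v, rfl⟩⟩, hG u v fun h => huv (h ▸ rfl)⟩
  rw [cpCount, hfilter, offDiag_card, Nat.choose_two_right, Nat.mul_sub_one]
  simp [singletons]

theorem coalitionCount_eq_choose_two : coalitionCount G = (Fintype.card V).choose 2 := by
  refine IsGreatest.csSup_eq ⟨⟨singletons V, isCPartition_singletons hG,
    (cpCount_singletons hG).symm⟩, ?_⟩
  rintro k ⟨π, hπ, rfl⟩
  exact cpCount_le_choose_two hπ

end Singletons

end

theorem cycleGraph_four_isCoalition_singleton :
    ∀ u v : Fin 4, u ≠ v → IsCoalition (SimpleGraph.cycleGraph 4) {u} {v} := by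
  simp only [IsCoalition, IsDomSet, ← insert_eq, mem_insert, mem_singleton, ne_eq, singleton_inj]
  decide

/-- `c(C_4) = 6`. -/
theorem stmt_11 : coalitionCount (SimpleGraph.cycleGraph 4) = 6 := by
  rw [coalitionCount_eq_choose_two cycleGraph_four_isCoalition_singleton]
  rfl
end
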